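/- Let φ = ∃X∀Y Θ be a quantified Boolean formula where Θ is quantifier-free and in disjunctive normal form with all variables among X ∪ Y. If the formula f(φ) is an atomic-level instance of a normal binary tautology, then φ is true. -/

import Mathlib

namespace CirquentCalc

/-- Formulas: literals (negation applied only to atoms), ∧, ∨. -/
inductive Fml where
  | pos : ℕ → Fml
  | neg : ℕ → Fml
  | and : Fml → Fml → Fml
  | or : Fml → Fml → Fml
deriving DecidableEq

namespace Fml

/-- Negation (pushed to atoms, as ¬ applies only to atoms). -/
def negate : Fml → Fml
  | pos n => neg n
  | neg n => pos n
  | and a b => or a.negate b.negate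
  | or a b => and a.negate b.negate

/-- Substitution extended homomorphically. -/
def subst (σ : ℕ → Fml) : Fml → Fml
  | pos n => σ n
  | neg n => (σ n).negate
  | and a b => and (a.subst σ) (b.subst σ)
  | or a b => or (a.subst σ) (b.subst σ)

/-- Classical evaluation under a truth assignment. -/
def eval (v : ℕ → Bool) : Fml → Bool
  | pos n => v n
  | neg n => !(v n)
  | and a b => a.eval v && b.eval v
  | or a b => a.eval v || b.eval v

/-- Number of positive occurrences of atom `a`. -/
def cPos (a : ℕ) : Fml → ℕ
  | pos n => if n = a then 1 else 0
  | neg _ => 0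
  | and f g => f.cPos a + g.cPos a
  | or f g => f.cPos a + g.cPos a

/-- Number of negative occurrences of atom `a`. -/
def cNeg (a : ℕ) : Fml → ℕ
  | pos _ => 0
  | neg n => if n = a then 1 else 0
  | and f g => f.cNeg a + g.cNeg a
  | or f g => f.cNeg a + g.cNeg a

/-- Total number of positive occurrences of atoms. -/
def posOcc : Fml → ℕ
  | pos _ => 1
  | neg _ => 0
  | and f g => f.posOcc + g.posOcc
  | or f g => f.posOcc + g.posOcc

/-- Length: total number of occurrences of literals and connectives. -/
def len : Fml → ℕ
  | pos _ => 1
  | neg _ => 1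
  | and f g => f.len + g.len + 1
  | or f g => f.len + g.len + 1

/-- Number of occurrences of ∧. -/
def nAnd : Fml → ℕ
  | pos _ => 0
  | neg _ => 0
  | and f g => f.nAnd + g.nAnd + 1
  | or f g => f.nAnd + g.nAnd

/-- Number of occurrences of ∨. -/
def nOr : Fml → ℕ
  | pos _ => 0
  | neg _ => 0
  | and f g => f.nOr + g.nOr
  | or f g => f.nOr + g.nOr + 1

end Fml

def Tautology (A : Fml) : Prop := ∀ v, A.eval v = true

/-- No atom has more than two occurrences. -/
def Binary (A : Fml) : Prop := ∀ a, A.cPos a + A.cNeg a ≤ 2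

/-- Whenever an atom occurs twice, one occurrence is positive and one negative. -/
def Normal (A : Fml) : Prop := ∀ a, A.cPos a ≤ 1 ∧ A.cNeg a ≤ 1

def AtomicLevel (σ : ℕ → Fml) : Prop := ∀ n, ∃ m, σ n = Fml.pos m

/-- `F` is an instance of `B`: σ(B) = F for some substitution σ. -/
def InstanceOf (F B : Fml) : Prop := ∃ σ, B.subst σ = F

/-- `F` is an atomic-level instance of `B`. -/
def AtomicInstanceOf (F B : Fml) : Prop := ∃ σ, AtomicLevel σ ∧ B.subst σ = F

/-- A cirquent: a pool of (occurrences of) formulas, and a list of ogroups,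
each an (index-)set of oformulas of the pool. -/
structure Cirquent where
  pool : List Fml
  groups : List (Finset ℕ)

def emptyCirquent : Cirquent := ⟨[], []⟩

def idCirquent (F : Fml) : Cirquent := ⟨[F.negate, F], [{0, 1}]⟩

/-- The cirquent with pool ⟨F⟩ and one ogroup containing F. -/
def fmlCirquent (F : Fml) : Cirquent := ⟨[F], [{0}]⟩

/-- Index renaming swapping `i` and `i+1`. -/
def swapIdx (i : ℕ) : ℕ → ℕ := fun j => if j = i then i + 1 else if j = i + 1 then i else j

/-- Index renaming when a new oformula is inserted at position `i`. -/
def insShift (i : ℕ) : ℕ → ℕ := fun j => if j < i then j else j + 1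

/-- Index renaming when the oformulas at positions `i`, `i+1` are merged into one at `i`. -/
def mergeIdx (i : ℕ) : ℕ → ℕ := fun j => if j ≤ i then j else j - 1

/-- Mix: placing the two premise cirquents side by side. -/
def MixStep (A B C : Cirquent) : Prop :=
  C.pool = A.pool ++ B.pool ∧
  C.groups = A.groups ++ B.groups.map (Finset.image (· + A.pool.length))

/-- Oformula exchange: swap two adjacent oformulas, preserving containment. -/
def OfExchStep (P C : Cirquent) : Prop :=
  ∃ (l₁ l₂ : List Fml) (F G : Fml),
    P.pool = l₁ ++ F :: G :: l₂ ∧ C.pool = l₁ ++ G :: F :: l₂ ∧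
    C.groups = P.groups.map (Finset.image (swapIdx l₁.length))

/-- Ogroup exchange: swap two adjacent ogroups. -/
def OgExchStep (P C : Cirquent) : Prop :=
  C.pool = P.pool ∧
  ∃ (g₁ g₂ : List (Finset ℕ)) (Γ Δ : Finset ℕ),
    P.groups = g₁ ++ Γ :: Δ :: g₂ ∧ C.groups = g₁ ++ Δ :: Γ :: g₂

/-- Pool weakening: insert a new oformula, contained in no ogroup. -/
def PoolWeakStep (P C : Cirquent) : Prop :=
  ∃ (l₁ l₂ : List Fml) (F : Fml),
    P.pool = l₁ ++ l₂ ∧ C.pool = l₁ ++ F :: l₂ ∧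
    C.groups = P.groups.map (Finset.image (insShift l₁.length))

/-- Ogroup weakening: add a new arc between a pre-existing ogroup and oformula. -/
def OgWeakStep (P C : Cirquent) : Prop :=
  C.pool = P.pool ∧
  ∃ (g₁ g₂ : List (Finset ℕ)) (Γ : Finset ℕ) (j : ℕ),
    j < P.pool.length ∧ j ∉ Γ ∧
    P.groups = g₁ ++ Γ :: g₂ ∧ C.groups = g₁ ++ insert j Γ :: g₂

/-- Downward duplication: replace an ogroup by two adjacent copies of it. -/
def DupDownStep (P C : Cirquent) : Prop :=
  C.pool = P.pool ∧
  ∃ (g₁ g₂ : List (Finset ℕ)) (Γ : Finset ℕ),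
    P.groups = g₁ ++ Γ :: g₂ ∧ C.groups = g₁ ++ Γ :: Γ :: g₂

/-- Upward duplication: the converse of downward duplication. -/
def DupUpStep (P C : Cirquent) : Prop :=
  C.pool = P.pool ∧
  ∃ (g₁ g₂ : List (Finset ℕ)) (Γ : Finset ℕ),
    P.groups = g₁ ++ Γ :: Γ :: g₂ ∧ C.groups = g₁ ++ Γ :: g₂

/-- ∨-introduction: merge two adjacent oformulas F, G into F ∨ G. -/
def OrIntroStep (P C : Cirquent) : Prop :=
  ∃ (l₁ l₂ : List Fml) (F G : Fml),
    P.pool = l₁ ++ F :: G :: l₂ ∧ C.pool = l₁ ++ (Fml.or F G) :: l₂ ∧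
    C.groups = P.groups.map (Finset.image (mergeIdx l₁.length))

/-- The merging of the ogroup list in ∧-introduction: no ogroup contains both `i`
and `i+1`; every ogroup containing `i` is immediately followed by one containing
`i+1` and vice versa; such pairs are merged. -/
inductive AndMerge (i : ℕ) : List (Finset ℕ) → List (Finset ℕ) → Prop where
  | nil : AndMerge i [] []
  | skip {Γ : Finset ℕ} {l l' : List (Finset ℕ)} :
      i ∉ Γ → (i + 1) ∉ Γ → AndMerge i l l' → AndMerge i (Γ :: l) (Γ :: l')
  | merge {Γ Δ : Finset ℕ} {l l' : List (Finset ℕ)} :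
      i ∈ Γ → (i + 1) ∉ Γ → (i + 1) ∈ Δ → i ∉ Δ →
      AndMerge i l l' → AndMerge i (Γ :: Δ :: l) ((Γ ∪ Δ) :: l')

/-- ∧-introduction. -/
def AndIntroStep (P C : Cirquent) : Prop :=
  ∃ (l₁ l₂ : List Fml) (F G : Fml) (merged : List (Finset ℕ)),
    P.pool = l₁ ++ F :: G :: l₂ ∧ C.pool = l₁ ++ (Fml.and F G) :: l₂ ∧
    AndMerge l₁.length P.groups merged ∧
    C.groups = merged.map (Finset.image (mergeIdx l₁.length))

inductive RuleName where
  | emptyAx | idAx | mix | ofExch | ogExch | poolWeak | ogWeak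
  | dupDown | dupUp | orIntro | andIntro
deriving DecidableEq

/-- The unary (one-premise) rules, by name. -/
def unRel : RuleName → Cirquent → Cirquent → Prop
  | .ofExch => OfExchStep
  | .ogExch => OgExchStep
  | .poolWeak => PoolWeakStep
  | .ogWeak => OgWeakStep
  | .dupDown => DupDownStep
  | .dupUp => DupUpStep
  | .orIntro => OrIntroStep
  | .andIntro => AndIntroStep
  | _ => fun _ _ => False

/-- Proof trees: each node is labeled by its cirquent and the rule used. -/
inductive PTree where
  | leaf (C : Cirquent) (r : RuleName)
  | un (C : Cirquent) (r : RuleName) (p : PTree)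
  | bin (C : Cirquent) (r : RuleName) (p q : PTree)

namespace PTree

def concl : PTree → Cirquent
  | leaf C _ => C
  | un C _ _ => C
  | bin C _ _ _ => C

/-- Validity: each node follows from its children by the named rule. -/
def Valid : PTree → Prop
  | leaf C r =>
      (r = .emptyAx ∧ C = emptyCirquent) ∨ (r = .idAx ∧ ∃ F, C = idCirquent F)
  | un C r p => p.Valid ∧ unRel r p.concl C
  | bin C r p q => p.Valid ∧ q.Valid ∧ r = .mix ∧ MixStep p.concl q.concl C

/-- Number of applications of rule `r` in the proof. -/
def count (r : RuleName) : PTree → ℕ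
  | leaf _ r' => if r' = r then 1 else 0
  | un _ r' p => (if r' = r then 1 else 0) + p.count r
  | bin _ r' p q => (if r' = r then 1 else 0) + p.count r + q.count r

/-- The cirquents occurring in the proof. -/
def cirquents : PTree → List Cirquent
  | leaf C _ => [C]
  | un C _ p => C :: p.cirquents
  | bin C _ p q => C :: (p.cirquents ++ q.cirquents)

/-- Total number of rule applications (nodes). -/
def nodes : PTree → ℕ
  | leaf _ _ => 1
  | un _ _ p => p.nodes + 1
  | bin _ _ p q => p.nodes + q.nodes + 1

/-- Number of leaves of the proof tree. -/
def leavesCount : PTree → ℕ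
  | leaf _ _ => 1
  | un _ _ p => p.leavesCount
  | bin _ _ p q => p.leavesCount + q.leavesCount

end PTree

/-- A proof uses no duplication. -/
def DupFree (p : PTree) : Prop :=
  p.count RuleName.dupDown = 0 ∧ p.count RuleName.dupUp = 0

/-- Provability of a cirquent in CL5. -/
def ProvesC (C : Cirquent) : Prop := ∃ p : PTree, p.Valid ∧ p.concl = C

/-- Provability of a formula in CL5. -/
def ProvesCL5 (F : Fml) : Prop := ∃ p : PTree, p.Valid ∧ p.concl = fmlCirquent F

/-- Provability of a formula in CL5⁻ (CL5 without duplication). -/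
def ProvesCL5m (F : Fml) : Prop :=
  ∃ p : PTree, p.Valid ∧ DupFree p ∧ p.concl = fmlCirquent F

/-- Number of arcs of a cirquent (sum of the sizes of its ogroups). -/
def Cirquent.arcs (C : Cirquent) : ℕ := (C.groups.map Finset.card).sum

/-- Size of a cirquent: sum of the lengths of the oformulas in its pool plus
the sum of the sizes of its ogroups. -/
def Cirquent.size (C : Cirquent) : ℕ := (C.pool.map Fml.len).sum + C.arcs

/-- Size of a proof: the sum of the sizes of the cirquents it contains. -/
def PTree.size (p : PTree) : ℕ := (p.cirquents.map Cirquent.size).sum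

/-- Total number of positive occurrences of atoms in the pool. -/
def Cirquent.poolPosOcc (C : Cirquent) : ℕ := (C.pool.map Fml.posOcc).sum

end CirquentCalc

namespace CirquentCalc

/-! The TQBF-Σ₂ reduction. A literal is a pair (atom, polarity); a quantifier-free
Boolean formula in disjunctive normal form is a list of conjunctions of literals. -/

abbrev Lit := ℕ × Bool
abbrev DNF := List (List Lit)

def evalLit (b : ℕ → Bool) (l : Lit) : Bool := if l.2 then b l.1 else !(b l.1)

def evalDNF (b : ℕ → Bool) (Θ : DNF) : Bool := Θ.any fun c => c.all (evalLit b)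

/-- ∃X∀Y Θ is true: some assignment to X makes Θ true under every extension. -/
def QBFTrue (X : Finset ℕ) (Θ : DNF) : Prop :=
  ∃ a : ℕ → Bool, ∀ b : ℕ → Bool, (∀ x ∈ X, b x = a x) → evalDNF b Θ = true

/-- Injective code for the fresh atoms used in f(φ). -/
def code (t z i j : ℕ) : ℕ := Nat.pair t (Nat.pair z (Nat.pair i j))

/-- The fresh atom Z^z. -/
def Zc (z : ℕ) : ℕ := code 0 z 0 0
/-- The fresh atom uᵢ^z. -/
def uc (z i : ℕ) : ℕ := code 1 z i 0
/-- The fresh atom vⱼ^z. -/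
def vc (z j : ℕ) : ℕ := code 2 z j 0
/-- The fresh atom P_{i,j}^y. -/
def Pc (y i j : ℕ) : ℕ := code 3 y i j
/-- A spare fresh atom (for degenerate empty disjunctions/conjunctions). -/
def dAtom : ℕ := code 4 0 0 0

/-- ⊥ as an abbreviation (used only in degenerate cases). -/
def botQ : Fml := Fml.and (Fml.pos dAtom) (Fml.neg dAtom)
/-- ⊤ as an abbreviation (used only in degenerate cases). -/
def topQ : Fml := Fml.or (Fml.pos dAtom) (Fml.neg dAtom)

/-- Disjunction of a list of formulas. -/
def bigOrQ (d : Fml) : List Fml → Fml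
  | [] => d
  | [a] => a
  | a :: b :: r => Fml.or a (bigOrQ d (b :: r))

/-- Conjunction of a list of formulas. -/
def bigAndQ (d : Fml) : List Fml → Fml
  | [] => d
  | [a] => a
  | a :: b :: r => Fml.and a (bigAndQ d (b :: r))

/-- Number of occurrences of the literal (z, s) in a list of literals. -/
def cnt (L : List Lit) (z : ℕ) (s : Bool) : ℕ := (L.filter fun l => l == (z, s)).length

/-- g(z) := Z^z ∧ (Z^z → u₁^z ∧ ⋯ ∧ u_{k^z}^z) ∧ (Z^z → ¬v₁^z ∧ ⋯ ∧ ¬v_{t^z}^z),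
a conjunct being omitted when k^z resp. t^z is 0; A → B is ¬A ∨ B. -/
def gz (flat : List Lit) (z : ℕ) : Fml :=
  let k := cnt flat z true
  let t := cnt flat z false
  let c1 : List Fml :=
    if k = 0 then [] else
      [Fml.or (Fml.neg (Zc z))
        (bigAndQ topQ ((List.range k).map fun i => Fml.pos (uc z (i + 1))))]
  let c2 : List Fml :=
    if t = 0 then [] else
      [Fml.or (Fml.neg (Zc z))
        (bigAndQ topQ ((List.range t).map fun j => Fml.neg (vc z (j + 1))))]
  bigAndQ topQ (Fml.pos (Zc z) :: (c1 ++ c2))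

/-- The index of the occurrence (1-based, counted among occurrences of the same
literal) of the literal at global position `w` of the flattened DNF. -/
def occIdx (flat : List Lit) (w : ℕ) (l : Lit) : ℕ := cnt (flat.take w) l.1 l.2 + 1

/-- Replacement of the literal `l` occurring at global position `w`:
an occurrence of z ∈ X becomes the corresponding uᵢ^z (resp. ¬vⱼ^z); an
occurrence of y ∉ X becomes the corresponding disjunction of P-literals. -/
def repl (X : Finset ℕ) (flat : List Lit) (w : ℕ) (l : Lit) : Fml :=
  let i := occIdx flat w l
  if l.1 ∈ X then
    if l.2 then Fml.pos (uc l.1 i) else Fml.neg (vc l.1 i)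
  else
    if l.2 then
      bigOrQ botQ ((List.range (cnt flat l.1 false)).map fun j =>
        Fml.pos (Pc l.1 i (j + 1)))
    else
      bigOrQ botQ ((List.range (cnt flat l.1 true)).map fun i' =>
        Fml.neg (Pc l.1 (i' + 1) i))

/-- Pair each literal of a conjunction with its global position, starting at `w`. -/
def idxConj : ℕ → List Lit → List (ℕ × Lit)
  | _, [] => []
  | w, a :: r => (w, a) :: idxConj (w + 1) r

/-- Pair each literal of a DNF with its global position. -/
def idxDNF : ℕ → DNF → List (List (ℕ × Lit))
  | _, [] => []
  | w, c :: r => idxConj w c :: idxDNF (w + c.length) r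

/-- The consequent of f(φ): Θ with each literal occurrence replaced. -/
def consequentQ (X : Finset ℕ) (Θ : DNF) : Fml :=
  let flat := Θ.flatten
  bigOrQ botQ ((idxDNF 0 Θ).map fun c =>
    bigAndQ topQ (c.map fun p => repl X flat p.1 p.2))

/-- f(φ) := (g(z₁) ∧ ⋯ ∧ g(z_l)) → Σ, where → is ¬A ∨ B with negation pushed
to atoms (when X is empty the antecedent is absent). -/
def fQBF (X : Finset ℕ) (Θ : DNF) : Fml :=
  match (X.sort (· ≤ ·)).map (gz Θ.flatten) with
  | [] => consequentQ X Θ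
  | g :: gs => Fml.or (Fml.negate (bigAndQ topQ (g :: gs))) (consequentQ X Θ)

end CirquentCalc

/-!
Let `σ` be the atomic substitution with `σ(B) = f(φ)` and evaluate `B` instead of `f(φ)`, so that
different occurrences of an atom of `f(φ)` may receive different values. Since `B` is normal,
the two positive occurrences of `Z^z` in `g(z)` come from distinct atoms of `B`; its negative
occurrence comes from an atom `m₀`. Making `m₀` the only true atom over `Z^z` makes at least one
of the implications `Z^z → ⋀ uᵢ^z`, `Z^z → ⋀ ¬vⱼ^z` vacuous, and the value of `z` is chosen to make
the other one true as well, so the antecedent of `f(φ)` is false. Giving every atom over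
`P^y_{i,j}` the value of `y`, a false `Θ` makes the consequent false too, contradicting that `B`
is a tautology.
-/

namespace CirquentCalc

namespace AtomicLevel

variable {σ : ℕ → Fml}

theorem subst_eq_pos (hσ : AtomicLevel σ) {B : Fml} {a : ℕ} (h : B.subst σ = .pos a) :
    ∃ m, B = .pos m ∧ σ m = .pos a := by
  cases B with
  | pos n => exact ⟨n, rfl, h⟩
  | neg n => obtain ⟨k, hk⟩ := hσ n; simp [Fml.subst, hk, Fml.negate] at h
  | and _ _ => simp [Fml.subst] at h
  | or _ _ => simp [Fml.subst] at h

theorem subst_eq_neg (hσ : AtomicLevel σ) {B : Fml} {a : ℕ} (h : B.subst σ = .neg a) :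
    ∃ m, B = .neg m ∧ σ m = .pos a := by
  cases B with
  | pos n => obtain ⟨k, hk⟩ := hσ n; simp [Fml.subst, hk] at h
  | neg n =>
    obtain ⟨k, hk⟩ := hσ n
    simp only [Fml.subst, hk, Fml.negate, Fml.neg.injEq] at h
    exact ⟨n, rfl, h ▸ hk⟩
  | and _ _ => simp [Fml.subst] at h
  | or _ _ => simp [Fml.subst] at h

theorem subst_eq_and (hσ : AtomicLevel σ) {B F G : Fml} (h : B.subst σ = .and F G) :
    ∃ B₁ B₂, B = .and B₁ B₂ ∧ B₁.subst σ = F ∧ B₂.subst σ = G := by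
  cases B with
  | pos n => obtain ⟨k, hk⟩ := hσ n; simp [Fml.subst, hk] at h
  | neg n => obtain ⟨k, hk⟩ := hσ n; simp [Fml.subst, hk, Fml.negate] at h
  | and B₁ B₂ => simp only [Fml.subst, Fml.and.injEq] at h; exact ⟨B₁, B₂, rfl, h⟩
  | or _ _ => simp [Fml.subst] at h

theorem subst_eq_or (hσ : AtomicLevel σ) {B F G : Fml} (h : B.subst σ = .or F G) :
    ∃ B₁ B₂, B = .or B₁ B₂ ∧ B₁.subst σ = F ∧ B₂.subst σ = G := by
  cases B with
  | pos n => obtain ⟨k, hk⟩ := hσ n; simp [Fml.subst, hk] at h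
  | neg n => obtain ⟨k, hk⟩ := hσ n; simp [Fml.subst, hk, Fml.negate] at h
  | and _ _ => simp [Fml.subst] at h
  | or B₁ B₂ => simp only [Fml.subst, Fml.or.injEq] at h; exact ⟨B₁, B₂, rfl, h⟩

end AtomicLevel

theorem Fml.cPos_le_one_of_or {B₁ B₂ : Fml} (h : ∀ m, (Fml.or B₁ B₂).cPos m ≤ 1) :
    (∀ m, B₁.cPos m ≤ 1) ∧ ∀ m, B₂.cPos m ≤ 1 :=
  ⟨fun m => (Nat.le_add_right _ _).trans (h m), fun m => (Nat.le_add_left _ _).trans (h m)⟩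

theorem negate_bigAndQ (d : Fml) (l : List Fml) :
    (bigAndQ d l).negate = bigOrQ d.negate (l.map Fml.negate) := by
  induction l with
  | nil => rfl
  | cons a l ih => cases l <;> simp_all [bigAndQ, bigOrQ, Fml.negate]

def FalseOnPreimages (σ : ℕ → Fml) (e : ℕ → Bool) (F : Fml) : Prop :=
  ∀ B : Fml, B.subst σ = F → B.eval e = false

section FalseOnPreimages

variable {σ : ℕ → Fml} {e : ℕ → Bool}

theorem falseOnPreimages_pos (hσ : AtomicLevel σ) {a : ℕ}
    (h : ∀ m, σ m = .pos a → e m = false) : FalseOnPreimages σ e (.pos a) := by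
  intro B hB
  obtain ⟨m, rfl, hm⟩ := hσ.subst_eq_pos hB
  exact h m hm

theorem falseOnPreimages_neg (hσ : AtomicLevel σ) {a : ℕ}
    (h : ∀ m, σ m = .pos a → e m = true) : FalseOnPreimages σ e (.neg a) := by
  intro B hB
  obtain ⟨m, rfl, hm⟩ := hσ.subst_eq_neg hB
  simp [Fml.eval, h m hm]

theorem FalseOnPreimages.and_left (hσ : AtomicLevel σ) {F : Fml} (hF : FalseOnPreimages σ e F)
    (G : Fml) : FalseOnPreimages σ e (.and F G) := by
  intro B hB
  obtain ⟨B₁, B₂, rfl, h₁, -⟩ := hσ.subst_eq_and hB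
  simp [Fml.eval, hF B₁ h₁]

theorem FalseOnPreimages.or (hσ : AtomicLevel σ) {F G : Fml} (hF : FalseOnPreimages σ e F)
    (hG : FalseOnPreimages σ e G) : FalseOnPreimages σ e (.or F G) := by
  intro B hB
  obtain ⟨B₁, B₂, rfl, h₁, h₂⟩ := hσ.subst_eq_or hB
  simp [Fml.eval, hF B₁ h₁, hG B₂ h₂]

theorem FalseOnPreimages.bigAndQ (hσ : AtomicLevel σ) {F : Fml} (hF : FalseOnPreimages σ e F)
    (d : Fml) {l : List Fml} (hl : F ∈ l) : FalseOnPreimages σ e (bigAndQ d l) := by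
  induction l with
  | nil => simp at hl
  | cons a l ih =>
    rcases l with _ | ⟨b, l⟩
    · simpa [List.mem_singleton.1 hl, CirquentCalc.bigAndQ] using hF
    intro B hB
    obtain ⟨B₁, B₂, rfl, h₁, h₂⟩ := hσ.subst_eq_and hB
    rcases List.mem_cons.1 hl with rfl | hl
    · simp [Fml.eval, hF B₁ h₁]
    · simp [Fml.eval, ih hl B₂ h₂]

theorem falseOnPreimages_bigOrQ (hσ : AtomicLevel σ) {d : Fml} {l : List Fml}
    (hd : l = [] → FalseOnPreimages σ e d) (hl : ∀ F ∈ l, FalseOnPreimages σ e F) :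
    FalseOnPreimages σ e (bigOrQ d l) := by
  induction l with
  | nil => exact hd rfl
  | cons a l ih =>
    rcases l with _ | ⟨b, l⟩
    · exact hl a (by simp)
    exact (hl a (by simp)).or hσ (ih (by simp) fun F hF => hl F (by simp [hF]))

theorem falseOnPreimages_botQ (hσ : AtomicLevel σ) (hd : ∀ m, σ m = .pos dAtom → e m = false) :
    FalseOnPreimages σ e botQ :=
  (falseOnPreimages_pos hσ hd).and_left hσ _

end FalseOnPreimages

theorem map_snd_idxConj (w : ℕ) (c : List Lit) : (idxConj w c).map Prod.snd = c := by
  induction c generalizing w with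
  | nil => rfl
  | cons a c ih => simp [idxConj, ih]

theorem map_map_snd_idxDNF (w : ℕ) (Θ : DNF) : (idxDNF w Θ).map (List.map Prod.snd) = Θ := by
  induction Θ generalizing w with
  | nil => rfl
  | cons c Θ ih => simp [idxDNF, map_snd_idxConj, ih]

section Consequent

variable {σ : ℕ → Fml} {e : ℕ → Bool} {X : Finset ℕ} {A b : ℕ → Bool}

theorem repl_falseOnPreimages (hσ : AtomicLevel σ)
    (hU : ∀ m z i, σ m = .pos (uc z i) → e m = A z)
    (hV : ∀ m z j, σ m = .pos (vc z j) → e m = A z)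
    (hP : ∀ m y i j, σ m = .pos (Pc y i j) → e m = b y)
    (hD : ∀ m, σ m = .pos dAtom → e m = false) (hbA : ∀ x ∈ X, b x = A x)
    (flat : List Lit) (w : ℕ) {l : Lit} (hl : evalLit b l = false) :
    FalseOnPreimages σ e (repl X flat w l) := by
  obtain ⟨y, s⟩ := l
  have hbot : FalseOnPreimages σ e botQ := falseOnPreimages_botQ hσ hD
  by_cases hy : y ∈ X <;> cases s <;> simp only [evalLit, Bool.not_eq_false', if_true,
    Bool.false_eq_true, if_false] at hl <;> simp only [repl, hy, if_true, if_false,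
    Bool.false_eq_true]
  · exact falseOnPreimages_neg hσ fun m hm => by rw [hV m y _ hm, ← hbA y hy, hl]
  · exact falseOnPreimages_pos hσ fun m hm => by rw [hU m y _ hm, ← hbA y hy, hl]
  · refine falseOnPreimages_bigOrQ hσ (fun _ => hbot) ?_
    simp only [List.mem_map, List.mem_range, forall_exists_index, and_imp]
    rintro _ i - rfl
    exact falseOnPreimages_neg hσ fun m hm => by rw [hP m y _ _ hm, hl]
  · refine falseOnPreimages_bigOrQ hσ (fun _ => hbot) ?_
    simp only [List.mem_map, List.mem_range, forall_exists_index, and_imp]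
    rintro _ j - rfl
    exact falseOnPreimages_pos hσ fun m hm => by rw [hP m y _ _ hm, hl]

theorem consequentQ_falseOnPreimages (hσ : AtomicLevel σ)
    (hU : ∀ m z i, σ m = .pos (uc z i) → e m = A z)
    (hV : ∀ m z j, σ m = .pos (vc z j) → e m = A z)
    (hP : ∀ m y i j, σ m = .pos (Pc y i j) → e m = b y)
    (hD : ∀ m, σ m = .pos dAtom → e m = false) (hbA : ∀ x ∈ X, b x = A x)
    {Θ : DNF} (hΘ : evalDNF b Θ = false) :
    FalseOnPreimages σ e (consequentQ X Θ) := by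
  refine falseOnPreimages_bigOrQ hσ (fun _ => falseOnPreimages_botQ hσ hD) ?_
  simp only [List.mem_map, forall_exists_index, and_imp]
  rintro _ c hc rfl
  have hcΘ : c.map Prod.snd ∈ Θ := map_map_snd_idxDNF 0 Θ ▸ List.mem_map_of_mem hc
  obtain ⟨p, hp, hpb⟩ : ∃ p ∈ c, evalLit b p.2 = false := by
    simp only [evalDNF, List.any_eq_false, List.all_eq_true, not_forall] at hΘ
    obtain ⟨l, hl, hlb⟩ := hΘ _ hcΘ
    obtain ⟨p, hp, rfl⟩ := List.mem_map.1 hl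
    exact ⟨p, hp, by simpa using hlb⟩
  exact (repl_falseOnPreimages hσ hU hV hP hD hbA _ _ hpb).bigAndQ hσ _
    (List.mem_map_of_mem (f := fun p : ℕ × Lit => repl X Θ.flatten p.1 p.2) hp)

end Consequent

-- `av` is the value chosen for `z`, and `nzv` the only atom over `Z^z` that is made true.
def RealizesChoice (σ : ℕ → Fml) (e : ℕ → Bool) (z : ℕ) (av : Bool) (nzv : ℕ) : Prop :=
  (∀ m, σ m = .pos (Zc z) → e m = decide (m = nzv)) ∧
  (∀ m i, σ m = .pos (uc z i) → e m = av) ∧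
  (∀ m j, σ m = .pos (vc z j) → e m = av)

section Antecedent

variable {σ : ℕ → Fml} {e : ℕ → Bool}

theorem falseOnPreimages_negate_bigAndQ (hσ : AtomicLevel σ) {d : Fml} {l : List Fml}
    (hl : l ≠ []) (h : ∀ F ∈ l, FalseOnPreimages σ e F.negate) :
    FalseOnPreimages σ e (bigAndQ d l).negate := by
  rw [negate_bigAndQ]
  refine falseOnPreimages_bigOrQ hσ (by simp [hl]) ?_
  simpa using h

theorem exists_eval_eq_false_of_subst_eq_and_pos (hσ : AtomicLevel σ) {B W : Fml} {a : ℕ}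
    (h : B.subst σ = .and (.pos a) W) :
    ∃ m, σ m = .pos a ∧ 1 ≤ B.cPos m ∧
      ∀ e, (e m = false ∨ FalseOnPreimages σ e W) → B.eval e = false := by
  obtain ⟨B₁, Bw, rfl, h₁, hw⟩ := hσ.subst_eq_and h
  obtain ⟨m, rfl, hm⟩ := hσ.subst_eq_pos h₁
  refine ⟨m, hm, by simp [Fml.cPos], fun e he => ?_⟩
  rcases he with he | he
  · simp [Fml.eval, he]
  · simp [Fml.eval, he Bw hw]

theorem exists_eval_uBranch_eq_false (hσ : AtomicLevel σ) {Bu : Fml} {z k : ℕ} (hk : k ≠ 0)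
    (h : Bu.subst σ =
      .and (.pos (Zc z)) (bigAndQ topQ ((List.range k).map fun i => .pos (uc z (i + 1)))).negate) :
    ∃ m, 1 ≤ Bu.cPos m ∧ ∀ e av nzv, RealizesChoice σ e z av nzv → (m ≠ nzv ∨ av = true) →
      Bu.eval e = false := by
  obtain ⟨m, hm, hmB, hBu⟩ := exists_eval_eq_false_of_subst_eq_and_pos hσ h
  refine ⟨m, hmB, fun e av nzv he hav => hBu e ?_⟩
  rcases hav with hmn | rfl
  · exact .inl (by simp [he.1 m hm, hmn])
  refine .inr (falseOnPreimages_negate_bigAndQ hσ (by simpa using hk) ?_)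
  simp only [List.mem_map, List.mem_range, forall_exists_index, and_imp]
  rintro _ i - rfl
  exact falseOnPreimages_neg hσ fun m hm => he.2.1 m _ hm

theorem exists_eval_vBranch_eq_false (hσ : AtomicLevel σ) {Bv : Fml} {z t : ℕ} (ht : t ≠ 0)
    (h : Bv.subst σ =
      .and (.pos (Zc z)) (bigAndQ topQ ((List.range t).map fun j => .neg (vc z (j + 1)))).negate) :
    ∃ m, 1 ≤ Bv.cPos m ∧ ∀ e av nzv, RealizesChoice σ e z av nzv → (m ≠ nzv ∨ av = false) →
      Bv.eval e = false := by
  obtain ⟨m, hm, hmB, hBv⟩ := exists_eval_eq_false_of_subst_eq_and_pos hσ h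
  refine ⟨m, hmB, fun e av nzv he hav => hBv e ?_⟩
  rcases hav with hmn | rfl
  · exact .inl (by simp [he.1 m hm, hmn])
  refine .inr (falseOnPreimages_negate_bigAndQ hσ (by simpa using ht) ?_)
  simp only [List.mem_map, List.mem_range, forall_exists_index, and_imp]
  rintro _ j - rfl
  exact falseOnPreimages_pos hσ fun m hm => he.2.2 m _ hm

theorem exists_choice_of_subst_eq_negate_gz (hσ : AtomicLevel σ) {Bz : Fml} {flat : List Lit}
    {z : ℕ} (hN : ∀ m, Bz.cPos m ≤ 1) (h : Bz.subst σ = (gz flat z).negate) :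
    ∃ av nzv, ∀ e, RealizesChoice σ e z av nzv → Bz.eval e = false := by
  by_cases hk : cnt flat z true = 0 <;> by_cases ht : cnt flat z false = 0 <;>
    simp only [gz, hk, ht, if_true, if_false, List.nil_append, List.cons_append, bigAndQ,
      Fml.negate] at h
  · obtain ⟨m₀, rfl, hm₀⟩ := hσ.subst_eq_neg h
    exact ⟨true, m₀, fun e he => by simp [Fml.eval, he.1 m₀ hm₀]⟩
  all_goals
    obtain ⟨B₀, Bz', rfl, h₀, h'⟩ := hσ.subst_eq_or h
    obtain ⟨m₀, rfl, hm₀⟩ := hσ.subst_eq_neg h₀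
    simp only [Fml.eval, Bool.or_eq_false_iff, Bool.not_eq_false']
  · obtain ⟨m₂, -, hBv⟩ := exists_eval_vBranch_eq_false hσ ht h'
    exact ⟨decide (m₂ ≠ m₀), m₀, fun e he =>
      ⟨by simp [he.1 m₀ hm₀], hBv e _ _ he (by by_cases m₂ = m₀ <;> simp [*])⟩⟩
  · obtain ⟨m₁, -, hBu⟩ := exists_eval_uBranch_eq_false hσ hk h'
    exact ⟨true, m₀, fun e he => ⟨by simp [he.1 m₀ hm₀], hBu e _ _ he (.inr rfl)⟩⟩
  · obtain ⟨Bu, Bv, rfl, hu, hv⟩ := hσ.subst_eq_or h'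
    obtain ⟨m₁, hm₁, hBu⟩ := exists_eval_uBranch_eq_false hσ hk hu
    obtain ⟨m₂, hm₂, hBv⟩ := exists_eval_vBranch_eq_false hσ ht hv
    have hm₁₂ : m₁ ≠ m₂ := by
      rintro rfl
      have := hN m₁
      simp only [Fml.cPos] at this
      omega
    refine ⟨decide (m₂ ≠ m₀), m₀, fun e he => ⟨by simp [he.1 m₀ hm₀], ?_⟩⟩
    simp only [Fml.eval, Bool.or_eq_false_iff]
    by_cases hm : m₂ = m₀
    · exact ⟨hBu e _ _ he (.inl (hm ▸ hm₁₂)), hBv e _ _ he (.inr (by simp [hm]))⟩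
    · exact ⟨hBu e _ _ he (.inr (by simp [hm])), hBv e _ _ he (.inl hm)⟩

-- The choices made for different `z` involve disjoint sets of atoms, so they can be combined.
theorem exists_choice_of_subst_eq_negate_bigAndQ_gz (hσ : AtomicLevel σ) {flat : List Lit}
    {L : List ℕ} (hL : L ≠ []) (hnd : L.Nodup) {Ba : Fml} (hN : ∀ m, Ba.cPos m ≤ 1)
    (h : Ba.subst σ = (bigAndQ topQ (L.map (gz flat))).negate) :
    ∃ (A : ℕ → Bool) (nz : ℕ → ℕ), ∀ e, (∀ z ∈ L, RealizesChoice σ e z (A z) (nz z)) →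
      Ba.eval e = false := by
  induction L generalizing Ba with
  | nil => exact absurd rfl hL
  | cons z L ih =>
    rcases L with _ | ⟨z', L⟩
    · obtain ⟨av, nzv, hz⟩ := exists_choice_of_subst_eq_negate_gz hσ hN h
      exact ⟨fun _ => av, fun _ => nzv, fun e he => hz e (he z (by simp))⟩
    obtain ⟨B₁, B₂, rfl, h₁, h₂⟩ := hσ.subst_eq_or h
    obtain ⟨hN₁, hN₂⟩ := Fml.cPos_le_one_of_or hN
    obtain ⟨av, nzv, hz⟩ := exists_choice_of_subst_eq_negate_gz hσ hN₁ h₁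
    obtain ⟨A, nz, hA⟩ := ih (by simp) hnd.of_cons hN₂ h₂
    have hzL : z ∉ z' :: L := (List.nodup_cons.1 hnd).1
    refine ⟨Function.update A z av, Function.update nz z nzv, fun e he => ?_⟩
    have e₁ : B₁.eval e = false := hz e (by simpa using he z (by simp))
    have e₂ : B₂.eval e = false := hA e fun w hw => by
      simpa [Function.update_of_ne (ne_of_mem_of_not_mem hw hzL)] using he w (by simp [hw])
    simp [Fml.eval, e₁, e₂]

theorem exists_choice_of_subst_eq_fQBF (hσ : AtomicLevel σ) {X : Finset ℕ} {Θ : DNF} {B : Fml}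
    (hN : ∀ m, B.cPos m ≤ 1) (h : B.subst σ = fQBF X Θ) :
    ∃ (A : ℕ → Bool) (nz : ℕ → ℕ), ∀ e, (∀ z ∈ X, RealizesChoice σ e z (A z) (nz z)) →
      FalseOnPreimages σ e (consequentQ X Θ) → B.eval e = false := by
  rcases hX : X.sort (· ≤ ·) with _ | ⟨z, L⟩
  · simp only [fQBF, hX, List.map_nil] at h
    exact ⟨fun _ => true, fun _ => 0, fun e _ hc => hc B h⟩
  simp only [fQBF, hX, List.map_cons] at h
  obtain ⟨Ba, Bc, rfl, ha, hc⟩ := hσ.subst_eq_or h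
  have hNa := (Fml.cPos_le_one_of_or hN).1
  rw [← List.map_cons] at ha
  obtain ⟨A, nz, hA⟩ := exists_choice_of_subst_eq_negate_bigAndQ_gz hσ (List.cons_ne_nil _ _)
    (hX ▸ X.sort_nodup _) hNa ha
  refine ⟨A, nz, fun e he hcons => ?_⟩
  have e₁ : Ba.eval e = false := hA e fun z hz => he z (by simpa [← hX] using hz)
  simp [Fml.eval, e₁, hcons Bc hc]

end Antecedent

-- The tag and the index `z` are read off the fresh atom `σ m = code tag z i j`.
def pullbackAssignment (σ : ℕ → Fml) (A : ℕ → Bool) (nz : ℕ → ℕ) (b : ℕ → Bool) (m : ℕ) :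
    Bool :=
  match σ m with
  | .pos a =>
    let z := a.unpair.2.unpair.1
    if a.unpair.1 = 0 then decide (m = nz z)
    else if a.unpair.1 = 3 then b z
    else if a.unpair.1 = 4 then false
    else A z
  | _ => false

section PullbackAssignment

variable {σ : ℕ → Fml} {A : ℕ → Bool} {nz : ℕ → ℕ} {b : ℕ → Bool} {m : ℕ}

theorem pullbackAssignment_Zc {z : ℕ} (h : σ m = .pos (Zc z)) :
    pullbackAssignment σ A nz b m = decide (m = nz z) := by
  simp [pullbackAssignment, h, Zc, code]

theorem pullbackAssignment_uc {z i : ℕ} (h : σ m = .pos (uc z i)) :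
    pullbackAssignment σ A nz b m = A z := by
  simp [pullbackAssignment, h, uc, code]

theorem pullbackAssignment_vc {z j : ℕ} (h : σ m = .pos (vc z j)) :
    pullbackAssignment σ A nz b m = A z := by
  simp [pullbackAssignment, h, vc, code]

theorem pullbackAssignment_Pc {y i j : ℕ} (h : σ m = .pos (Pc y i j)) :
    pullbackAssignment σ A nz b m = b y := by
  simp [pullbackAssignment, h, Pc, code]

theorem pullbackAssignment_dAtom (h : σ m = .pos dAtom) :
    pullbackAssignment σ A nz b m = false := by
  simp [pullbackAssignment, h, dAtom, code]

theorem realizesChoice_pullbackAssignment (z : ℕ) :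
    RealizesChoice σ (pullbackAssignment σ A nz b) z (A z) (nz z) :=
  ⟨fun _ => pullbackAssignment_Zc, fun _ _ => pullbackAssignment_uc,
    fun _ _ => pullbackAssignment_vc⟩

end PullbackAssignment

end CirquentCalc

open CirquentCalc

theorem normal_binary_instance_implies_qbf_true_general (X : Finset ℕ) (Θ : DNF)
    (h : ∃ B : Fml, Binary B ∧ Normal B ∧ Tautology B ∧
      AtomicInstanceOf (fQBF X Θ) B) :
    QBFTrue X Θ := by
  obtain ⟨B, -, hN, hB, σ, hσ, hsub⟩ := h
  obtain ⟨A, nz, hA⟩ := exists_choice_of_subst_eq_fQBF hσ (fun m => (hN m).1) hsub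
  refine ⟨A, fun b hb => ?_⟩
  by_contra hΘ
  have hc : FalseOnPreimages σ (pullbackAssignment σ A nz b) (consequentQ X Θ) :=
    consequentQ_falseOnPreimages (A := A) (b := b) hσ (fun _ _ _ => pullbackAssignment_uc)
      (fun _ _ _ => pullbackAssignment_vc) (fun _ _ _ _ => pullbackAssignment_Pc)
      (fun _ => pullbackAssignment_dAtom) hb (Bool.eq_false_iff.mpr hΘ)
  have hBfalse := hA _ (fun z _ => realizesChoice_pullbackAssignment z) hc
  simp [hB _] at hBfalse

/-- For φ = ∃X∀Y Θ with Θ quantifier-free in DNF over X ∪ Y, if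
f(φ) is an atomic-level instance of a normal binary tautology then φ is true. -/
theorem normal_binary_instance_implies_qbf_true (X Y : Finset ℕ) (Θ : DNF)
    (hXY : Disjoint X Y) (hvars : ∀ c ∈ Θ, ∀ l ∈ c, l.1 ∈ X ∪ Y)
    (h : ∃ B : Fml, Binary B ∧ Normal B ∧ Tautology B ∧
      AtomicInstanceOf (fQBF X Θ) B) :
    QBFTrue X Θ :=
  normal_binary_instance_implies_qbf_true_general X Θ h
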